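/- Partial trace structure of fidelity to a pure product target: given a pure state ρ₀ on H_sys and a state Γ[ρ] on H_ext ⊗ H_sys with Tr(Γ[ρ](𝟙⊗ρ₀)) > 0, setting Λ[ρ] = Tr_ext(Γ[ρ]) and ρ_ext = Tr_sys(Γ[ρ](ρ₀⊗𝟙相应))/Tr(Γ[ρ](𝟙⊗ρ₀)) (the normalized conditional state on the extension), one has F(Λ[ρ], ρ₀) = F(Γ[ρ], ρ_ext ⊗ ρ₀). -/

import Mathlib

open Matrix Kronecker MeasureTheory ComplexOrder

noncomputable section

def msqrt {α : Type*} [Fintype α] [DecidableEq α] (A : Matrix α α ℂ) : Matrix α α ℂ :=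
  open scoped Classical in
  if h : A.PosSemidef then
    (h.1.eigenvectorUnitary : Matrix α α ℂ) * diagonal ((↑) ∘ (Real.sqrt ∘ h.1.eigenvalues)) *
      (star (h.1.eigenvectorUnitary : Matrix α α ℂ)) else 0

def fid {α : Type*} [Fintype α] [DecidableEq α] (ρ σ : Matrix α α ℂ) : ℝ :=
  ((msqrt (msqrt ρ * σ * msqrt ρ)).trace).re ^ 2

def sineDist {α : Type*} [Fintype α] [DecidableEq α] (ρ σ : Matrix α α ℂ) : ℝ :=
  Real.sqrt (1 - fid ρ σ)

def traceDist {α : Type*} [Fintype α] [DecidableEq α] (ρ σ : Matrix α α ℂ) : ℝ :=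
  (1/2) * ((msqrt ((ρ - σ)ᴴ * (ρ - σ))).trace).re

def IsDensity {α : Type*} [Fintype α] (ρ : Matrix α α ℂ) : Prop :=
  ρ.PosSemidef ∧ ρ.trace = 1

def IsPureState {α : Type*} [Fintype α] (ρ : Matrix α α ℂ) : Prop :=
  IsDensity ρ ∧ ∃ ψ : α → ℂ, ρ = Matrix.vecMulVec ψ (star ψ)

def tr' {α : Type*} [Fintype α] (A : Matrix α α ℂ) : ℝ := A.trace.re

def nstate {α : Type*} [Fintype α] (ρ : Matrix α α ℂ) : Matrix α α ℂ :=
  (((tr' ρ : ℝ) : ℂ))⁻¹ • ρ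

def IsCPTD {α β : Type*} [Fintype α] [Fintype β] [DecidableEq α] [DecidableEq β]
    (E : Matrix α α ℂ →ₗ[ℂ] Matrix β β ℂ) : Prop :=
  ∃ (k : ℕ) (K : Fin k → Matrix β α ℂ),
    (∀ ρ, E ρ = ∑ i, K i * ρ * (K i)ᴴ) ∧ (1 - ∑ i, (K i)ᴴ * K i).PosSemidef

def IsCPTP {α β : Type*} [Fintype α] [Fintype β] [DecidableEq α] [DecidableEq β]
    (E : Matrix α α ℂ →ₗ[ℂ] Matrix β β ℂ) : Prop :=
  ∃ (k : ℕ) (K : Fin k → Matrix β α ℂ),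
    (∀ ρ, E ρ = ∑ i, K i * ρ * (K i)ᴴ) ∧ (∑ i, (K i)ᴴ * K i = 1)

def tensId {α β γ : Type*} [Fintype α]
    (E : Matrix α α ℂ → Matrix β β ℂ)
    (ρ : Matrix (α × γ) (α × γ) ℂ) : Matrix (β × γ) (β × γ) ℂ :=
  Matrix.of fun p q => E (Matrix.of fun a b => ρ (a, p.2) (b, q.2)) p.1 q.1

def maxEnt (d : ℕ) : Matrix (Fin d × Fin d) (Fin d × Fin d) ℂ :=
  Matrix.of fun p q => if p.1 = p.2 ∧ q.1 = q.2 then ((d : ℂ))⁻¹ else 0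

def ptraceSnd {α β : Type*} [Fintype β] (ρ : Matrix (α × β) (α × β) ℂ) : Matrix α α ℂ :=
  Matrix.of fun a b => ∑ j, ρ (a, j) (b, j)

def ptraceFst {α β : Type*} [Fintype α] (ρ : Matrix (α × β) (α × β) ℂ) : Matrix β β ℂ :=
  Matrix.of fun i j => ∑ a, ρ (a, i) (a, j)

def choiSine {m n : ℕ} (E₁ E₂ : Matrix (Fin m) (Fin m) ℂ →ₗ[ℂ] Matrix (Fin n) (Fin n) ℂ) : ℝ :=
  sineDist (nstate (tensId (⇑E₁) (maxEnt m))) (nstate (tensId (⇑E₂) (maxEnt m)))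

def diamondSine {m n : ℕ} (E₁ E₂ : Matrix (Fin m) (Fin m) ℂ →ₗ[ℂ] Matrix (Fin n) (Fin n) ℂ) : ℝ :=
  sSup { x | ∃ ρ : Matrix (Fin m × Fin m) (Fin m × Fin m) ℂ, IsPureState ρ ∧
    tr' (tensId (⇑E₁) ρ) ≠ 0 ∧ tr' (tensId (⇑E₂) ρ) ≠ 0 ∧
    x = sineDist (nstate (tensId (⇑E₁) ρ)) (nstate (tensId (⇑E₂) ρ)) }

/-! With `P = 1 ⊗ ρ₀`, both fidelities equal `p = Tr(Γ P)`. For a pure target the sandwich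
`√Λ ρ₀ √Λ` is a rank-one `v v†`, whose square root has trace `‖v‖ = √Tr(Λ ρ₀) = √p`. On the
other side `ρ_ext ⊗ ρ₀ = p⁻¹ P Γ P`, so `√Γ (ρ_ext ⊗ ρ₀) √Γ = p⁻¹ A²` with `A = √Γ P √Γ ≥ 0`;
its square root is `p^(-1/2) A`, of trace `√p` again. -/

open scoped MatrixOrder

section Msqrt

variable {α : Type*} [Fintype α] [DecidableEq α]

lemma msqrt_eq_cfcSqrt {A : Matrix α α ℂ} (hA : A.PosSemidef) : msqrt A = CFC.sqrt A := by
  rw [msqrt, dif_pos hA, CFC.sqrt_eq_real_sqrt A hA.nonneg,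
    cfcₙ_eq_cfc (hf0 := Real.sqrt_zero), hA.1.cfc_eq]
  simp [IsHermitian.cfc, Function.comp_def]

lemma posSemidef_msqrt {A : Matrix α α ℂ} (hA : A.PosSemidef) : (msqrt A).PosSemidef :=
  msqrt_eq_cfcSqrt hA ▸ (CFC.sqrt_nonneg A).posSemidef

lemma msqrt_mul_msqrt {A : Matrix α α ℂ} (hA : A.PosSemidef) : msqrt A * msqrt A = A := by
  rw [msqrt_eq_cfcSqrt hA]
  exact CFC.sqrt_mul_sqrt_self A hA.nonneg

lemma msqrt_mul_self {B : Matrix α α ℂ} (hB : B.PosSemidef) : msqrt (B * B) = B := by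
  have hBB : (B * B).PosSemidef := by
    simpa only [hB.1.eq] using posSemidef_conjTranspose_mul_self B
  rw [msqrt_eq_cfcSqrt hBB]
  exact CFC.sqrt_unique rfl hB.nonneg

lemma fid_eq_re_trace_of_msqrt_conj_eq {ρ σ A : Matrix α α ℂ} (hA : A.PosSemidef)
    (h : msqrt ρ * σ * msqrt ρ = (A.trace.re : ℂ)⁻¹ • (A * A)) :
    fid ρ σ = A.trace.re := by
  set t := A.trace.re
  have ht : 0 ≤ t := (RCLike.nonneg_iff.mp hA.trace_nonneg).1
  have hAt : A.trace = t := Complex.eq_re_of_ofReal_le hA.trace_nonneg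
  have hB : ((√t : ℂ)⁻¹ • A).PosSemidef := hA.smul (by positivity)
  have hBB : ((√t : ℂ)⁻¹ • A) * ((√t : ℂ)⁻¹ • A) = (t : ℂ)⁻¹ • (A * A) := by
    rw [smul_mul_smul_comm, ← mul_inv, ← Complex.ofReal_mul, Real.mul_self_sqrt ht]
  rw [fid, h, ← hBB, msqrt_mul_self hB, trace_smul, hAt, smul_eq_mul, ← Complex.ofReal_inv,
    ← Complex.ofReal_mul, Complex.ofReal_re, mul_pow, inv_pow, Real.sq_sqrt ht, inv_mul_eq_div,
    sq, mul_self_div_self]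

end Msqrt

section Pure

variable {α : Type*} [Fintype α]

lemma vecMulVec_self_star_eq_inv_trace_smul_mul_self (v : α → ℂ) :
    vecMulVec v (star v) = ((vecMulVec v (star v)).trace.re : ℂ)⁻¹ •
      (vecMulVec v (star v) * vecMulVec v (star v)) := by
  rcases eq_or_ne v 0 with rfl | hv
  · simp
  have htrace : ((vecMulVec v (star v)).trace.re : ℂ) = star v ⬝ᵥ v :=
    (Complex.eq_re_of_ofReal_le (posSemidef_vecMulVec_self_star v).trace_nonneg).symm.trans
      (by rw [trace_vecMulVec, dotProduct_comm])
  rw [htrace, vecMulVec_mul_vecMulVec, vecMulVec_smul, inv_smul_smul₀]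
  exact dotProduct_star_self_eq_zero.not.mpr hv

lemma Matrix.IsHermitian.mul_vecMulVec_self_star_mul {S : Matrix α α ℂ} (hS : S.IsHermitian)
    (ψ : α → ℂ) : S * vecMulVec ψ (star ψ) * S = vecMulVec (S *ᵥ ψ) (star (S *ᵥ ψ)) := by
  rw [mul_vecMulVec, vecMulVec_mul, star_mulVec, hS.eq]

lemma fid_vecMulVec_self_star_right [DecidableEq α] {ρ : Matrix α α ℂ} (hρ : ρ.PosSemidef)
    (ψ : α → ℂ) : fid ρ (vecMulVec ψ (star ψ)) = (ρ * vecMulVec ψ (star ψ)).trace.re := by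
  have hconj := (posSemidef_msqrt hρ).1.mul_vecMulVec_self_star_mul ψ
  rw [fid_eq_re_trace_of_msqrt_conj_eq (posSemidef_vecMulVec_self_star _)
    (hconj.trans (vecMulVec_self_star_eq_inv_trace_smul_mul_self _)), ← hconj, trace_mul_cycle,
    msqrt_mul_msqrt hρ]

end Pure

section PartialTrace

variable {α β : Type*} [Fintype α]

lemma ptraceFst_eq_sum_submatrix (ρ : Matrix (α × β) (α × β) ℂ) :
    ptraceFst ρ = ∑ a, ρ.submatrix (Prod.mk a) (Prod.mk a) := by
  ext i j
  simp [ptraceFst, Matrix.sum_apply]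

lemma Matrix.PosSemidef.ptraceFst {ρ : Matrix (α × β) (α × β) ℂ} (hρ : ρ.PosSemidef) :
    (ptraceFst ρ).PosSemidef := by
  rw [ptraceFst_eq_sum_submatrix]
  exact posSemidef_sum _ fun a _ => hρ.submatrix _

variable [Fintype β] [DecidableEq α]

lemma trace_ptraceFst_mul (ρ : Matrix (α × β) (α × β) ℂ) (M : Matrix β β ℂ) :
    (ptraceFst ρ * M).trace = (ρ * (1 ⊗ₖ M)).trace := by
  simp only [trace, ptraceFst, diag_apply, mul_apply, of_apply, Finset.sum_mul, kroneckerMap_apply,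
    one_apply, ite_mul, one_mul, zero_mul, mul_ite, mul_zero, Fintype.sum_prod_type,
    Finset.sum_ite_irrel, Finset.sum_const_zero, Finset.sum_ite_eq', Finset.mem_univ, if_true]
  rw [Finset.sum_comm (s := Finset.univ (α := α))]
  exact Finset.sum_congr rfl fun _ _ => Finset.sum_comm

lemma ptraceSnd_mul_one_kronecker_vecMulVec_kronecker (ρ : Matrix (α × β) (α × β) ℂ)
    (ψ φ : β → ℂ) :
    ptraceSnd (ρ * (1 ⊗ₖ vecMulVec ψ φ)) ⊗ₖ vecMulVec ψ φ =
      (1 ⊗ₖ vecMulVec ψ φ) * ρ * (1 ⊗ₖ vecMulVec ψ φ) := by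
  ext ⟨a, i⟩ ⟨b, l⟩
  simp only [ptraceSnd, mul_apply, kroneckerMap_apply, one_apply, ite_mul, one_mul, zero_mul,
    mul_ite, mul_zero, Fintype.sum_prod_type, Finset.sum_ite_irrel, Finset.sum_const_zero,
    Finset.sum_ite_eq', Finset.sum_ite_eq, Finset.mem_univ, if_true, of_apply, Finset.sum_mul]
  rw [Finset.sum_comm]
  exact Finset.sum_congr rfl fun _ _ => Finset.sum_congr rfl fun _ _ => by
    simp only [vecMulVec_apply]; ring

end PartialTrace

theorem fidelity_partial_trace_pure_target_general {ext s : ℕ}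
    (ψ₀ : Fin s → ℂ)
    (ρ₀ : Matrix (Fin s) (Fin s) ℂ) (hρ₀ : ρ₀ = Matrix.vecMulVec ψ₀ (star ψ₀))
    (Γρ : Matrix (Fin ext × Fin s) (Fin ext × Fin s) ℂ) (hΓ : IsDensity Γρ)
    (ρext : Matrix (Fin ext) (Fin ext) ℂ)
    (hρext : ρext = ((tr' (Γρ * ((1 : Matrix (Fin ext) (Fin ext) ℂ) ⊗ₖ ρ₀)) : ℂ))⁻¹ •
      ptraceSnd (Γρ * ((1 : Matrix (Fin ext) (Fin ext) ℂ) ⊗ₖ ρ₀))) :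
    fid (ptraceFst Γρ) ρ₀ = fid Γρ (ρext ⊗ₖ ρ₀) := by
  subst hρ₀ hρext
  set P := (1 : Matrix (Fin ext) (Fin ext) ℂ) ⊗ₖ vecMulVec ψ₀ (star ψ₀)
  set S := msqrt Γρ
  have hSS : S * S = Γρ := msqrt_mul_msqrt hΓ.1
  have hS : S.IsHermitian := (posSemidef_msqrt hΓ.1).1
  have hA : (S * P * S).PosSemidef := by
    simpa only [hS.eq] using (PosSemidef.one.kronecker
      (posSemidef_vecMulVec_self_star ψ₀)).conjTranspose_mul_mul_same S
  have htrA : (S * P * S).trace = (Γρ * P).trace := by rw [trace_mul_cycle, hSS]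
  have hconj : S * ((((tr' (Γρ * P) : ℂ))⁻¹ • ptraceSnd (Γρ * P)) ⊗ₖ vecMulVec ψ₀ (star ψ₀)) * S
      = ((S * P * S).trace.re : ℂ)⁻¹ • (S * P * S * (S * P * S)) := by
    rw [htrA, smul_kronecker, ptraceSnd_mul_one_kronecker_vecMulVec_kronecker, Matrix.mul_smul,
      Matrix.smul_mul]
    congr 1
    rw [← hSS]
    simp only [Matrix.mul_assoc]
    rfl
  rw [fid_vecMulVec_self_star_right hΓ.1.ptraceFst, trace_ptraceFst_mul,
    fid_eq_re_trace_of_msqrt_conj_eq hA hconj, htrA]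

/-- Fidelity to a pure product target via partial traces
(Proposition 2 of Sekatski et al.). -/
theorem fidelity_partial_trace_pure_target {ext s : ℕ}
    (ψ₀ : Fin s → ℂ) (hψ : ∑ i, Complex.normSq (ψ₀ i) = 1)
    (ρ₀ : Matrix (Fin s) (Fin s) ℂ) (hρ₀ : ρ₀ = Matrix.vecMulVec ψ₀ (star ψ₀))
    (Γρ : Matrix (Fin ext × Fin s) (Fin ext × Fin s) ℂ) (hΓ : IsDensity Γρ)
    (hpos : 0 < tr' (Γρ * ((1 : Matrix (Fin ext) (Fin ext) ℂ) ⊗ₖ ρ₀)))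
    (ρext : Matrix (Fin ext) (Fin ext) ℂ)
    (hρext : ρext = ((tr' (Γρ * ((1 : Matrix (Fin ext) (Fin ext) ℂ) ⊗ₖ ρ₀)) : ℂ))⁻¹ •
      ptraceSnd (Γρ * ((1 : Matrix (Fin ext) (Fin ext) ℂ) ⊗ₖ ρ₀))) :
    fid (ptraceFst Γρ) ρ₀ = fid Γρ (ρext ⊗ₖ ρ₀) :=
  fidelity_partial_trace_pure_target_general ψ₀ ρ₀ hρ₀ Γρ hΓ ρext hρext
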